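/- If A and B are distinct points, both incident with the plane π, then every line l ∈ A ∩ B lies in π (i.e. l ∈ π); that is, the line AB joining the two points lies in any plane through both. -/
import Mathlib


/-!
Axiomatic projective space with lines as primary elements (Robinson,
"Projective space: lines and duality").

`perp I S` is `S^♢`, the set of lines incident to every line of `S`;
`lineSig I a b` is `Σ(a,b) = {a,b}^♢ \ {a,b}^♢♢`, the lines that belong to a
skew pair in `[a b]`.
-/

namespace PSLD

variable {L : Type*}

/-- `S^♢`: the lines incident to every member of `S`. -/
def perp (I : L → L → Prop) (S : Set L) : Set L := {l | ∀ s ∈ S, I l s}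

/-- `Σ(a,b) = {a,b}^♢ \ {a,b}^♢♢`. -/
def lineSig (I : L → L → Prop) (a b : L) : Set L :=
  perp I {a, b} \ perp I (perp I {a, b})

/-- A triad: pairwise incident distinct lines `a, b, c` with `c ∈ Σ(a,b)`. -/
def Triad (I : L → L → Prop) (a b c : L) : Prop :=
  a ≠ b ∧ I a b ∧ c ∈ lineSig I a b

/-- A nonempty type of lines with a reflexive symmetric incidence relation
satisfying AXIOM [1], AXIOM [2.1], AXIOM [2.2], AXIOM [2.3]. -/
structure LineGeom (L : Type*) where
  /-- incidence -/
  I : L → L → Prop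
  nonempty : Nonempty L
  refl : ∀ l, I l l
  symm : ∀ a b, I a b → I b a
  /-- AXIOM [1]: each `l^♢` contains a pairwise skew triple. -/
  ax1 : ∀ l : L, ∃ x y z : L, I x l ∧ I y l ∧ I z l ∧ ¬ I x y ∧ ¬ I y z ∧ ¬ I x z
  /-- AXIOM [2.1]: for distinct incident `a, b`, `[a b]` contains a skew pair. -/
  ax21 : ∀ a b : L, a ≠ b → I a b →
    ∃ x ∈ perp I {a, b}, ∃ y ∈ perp I {a, b}, ¬ I x y
  /-- AXIOM [2.2]: for distinct incident `a, b` and `z ∈ Σ(a,b)`,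
  `[a b z]` contains no skew pair. -/
  ax22 : ∀ a b z : L, a ≠ b → I a b → z ∈ lineSig I a b →
    ∀ x ∈ perp I {a, b, z}, ∀ y ∈ perp I {a, b, z}, I x y
  /-- AXIOM [2.3]: for distinct incident `a, b` and a skew pair `x, y ∈ [a b]`,
  every line of `[a b]` is incident to `x` or to `y`. -/
  ax23 : ∀ a b x y : L, a ≠ b → I a b → x ∈ perp I {a, b} → y ∈ perp I {a, b} →
    ¬ I x y → ∀ l ∈ perp I {a, b}, I l x ∨ I l y

/-- A `LineGeom` together with a symmetric labelling `Σ_Y`, `Σ_∇` of the two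
incidence classes of each `Σ(a,b)`, the derived points `pt a b = a Y b` and
planes `pl a b = a ∇ b`, and AXIOM [3], AXIOM [4]. -/
structure LabeledLineGeom (L : Type*) extends LineGeom L where
  /-- the incidence class `Σ_Y(a,b)` -/
  SY : L → L → Set L
  /-- the incidence class `Σ_∇(a,b)` -/
  SD : L → L → Set L
  SY_symm : ∀ a b : L, SY a b = SY b a
  SD_symm : ∀ a b : L, SD a b = SD b a
  SY_union_SD : ∀ a b : L, a ≠ b → I a b → SY a b ∪ SD a b = lineSig I a b
  SY_disj_SD : ∀ a b : L, a ≠ b → I a b → SY a b ∩ SD a b = ∅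
  SY_nonempty : ∀ a b : L, a ≠ b → I a b → (SY a b).Nonempty
  SD_nonempty : ∀ a b : L, a ≠ b → I a b → (SD a b).Nonempty
  SY_incident : ∀ a b : L, a ≠ b → I a b → ∀ x ∈ SY a b, ∀ y ∈ SY a b, I x y
  SD_incident : ∀ a b : L, a ≠ b → I a b → ∀ x ∈ SD a b, ∀ y ∈ SD a b, I x y
  SY_skew_SD : ∀ a b : L, a ≠ b → I a b → ∀ x ∈ SY a b, ∀ y ∈ SD a b, ¬ I x y
  /-- the point `a Y b` -/
  pt : L → L → Set L
  /-- the plane `a ∇ b` -/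
  pl : L → L → Set L
  /-- `a Y b = [a b c]` for any `c ∈ Σ_Y(a,b)` (well-defined). -/
  pt_spec : ∀ a b c : L, a ≠ b → I a b → c ∈ SY a b → pt a b = perp I {a, b, c}
  /-- `a ∇ b = [a b c]` for any `c ∈ Σ_∇(a,b)` (well-defined). -/
  pl_spec : ∀ a b c : L, a ≠ b → I a b → c ∈ SD a b → pl a b = perp I {a, b, c}
  /-- AXIOM [3]: each triad admits a triad with disjoint perp. -/
  ax3 : ∀ a b c : L, Triad I a b c → ∃ p q r : L, Triad I p q r ∧
    perp I {a, b, c} ∩ perp I {p, q, r} = ∅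
  /-- AXIOM [4]: any two points meet; any two planes meet. -/
  ax4 : ∀ a b p q : L, a ≠ b → I a b → p ≠ q → I p q →
    (pt a b ∩ pt p q).Nonempty ∧ (pl a b ∩ pl p q).Nonempty

/-- `P` is a point: `P = a Y b` for some distinct incident lines `a, b`. -/
def IsPoint (G : LabeledLineGeom L) (P : Set L) : Prop :=
  ∃ a b : L, a ≠ b ∧ G.I a b ∧ P = G.pt a b

/-- `π` is a plane: `π = a ∇ b` for some distinct incident lines `a, b`. -/
def IsPlane (G : LabeledLineGeom L) (π : Set L) : Prop :=
  ∃ a b : L, a ≠ b ∧ G.I a b ∧ π = G.pl a b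

lemma mem_perp_pair {I : L → L → Prop} {x a b : L} :
    x ∈ perp I {a, b} ↔ I x a ∧ I x b := by
  simp [perp]

lemma mem_perp_triple {I : L → L → Prop} {x a b c : L} :
    x ∈ perp I {a, b, c} ↔ I x a ∧ I x b ∧ I x c := by
  simp [perp]

/-- Lemma A: `[a b c]` (with `c ∈ Σ(a,b)`) equals `[x y z]` for any two of its
distinct members `x, y` and a suitable `z ∈ Σ(x,y)` inside it. -/
lemma exists_core (G : LineGeom L) {a b c x y : L} (hab : a ≠ b) (hIab : G.I a b)
    (hc : c ∈ lineSig G.I a b) (hx : x ∈ perp G.I {a, b, c})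
    (hy : y ∈ perp G.I {a, b, c}) (hxy : x ≠ y) :
    G.I x y ∧ ∃ z ∈ lineSig G.I x y, perp G.I {a, b, c} = perp G.I {x, y, z} := by
  have hcab : c ∈ perp G.I {a, b} := hc.1
  obtain ⟨hca, hcb⟩ := mem_perp_pair.1 hcab
  have clique := G.ax22 a b c hab hIab hc
  have hIxy : G.I x y := clique x hx y hy
  have ha : a ∈ perp G.I {a, b, c} :=
    mem_perp_triple.2 ⟨G.refl a, hIab, G.symm _ _ hca⟩
  have hb : b ∈ perp G.I {a, b, c} :=
    mem_perp_triple.2 ⟨G.symm _ _ hIab, G.refl b, G.symm _ _ hcb⟩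
  have hcm : c ∈ perp G.I {a, b, c} :=
    mem_perp_triple.2 ⟨hca, hcb, G.refl c⟩
  have hz : ∃ z ∈ perp G.I {a, b, c}, z ∈ lineSig G.I x y := by
    by_contra h
    push_neg at h
    have hcore : ∀ z ∈ perp G.I {a, b, c}, z ∈ perp G.I (perp G.I {x, y}) := by
      intro z hzS
      have hzxy : z ∈ perp G.I {x, y} :=
        mem_perp_pair.2 ⟨clique z hzS x hx, clique z hzS y hy⟩
      by_contra hzc
      exact h z hzS ⟨hzxy, hzc⟩
    obtain ⟨u, hu, v, hv, huv⟩ := G.ax21 x y hxy hIxy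
    have huS : u ∈ perp G.I {a, b, c} := mem_perp_triple.2
      ⟨G.symm _ _ (hcore a ha u hu), G.symm _ _ (hcore b hb u hu),
        G.symm _ _ (hcore c hcm u hu)⟩
    have hvS : v ∈ perp G.I {a, b, c} := mem_perp_triple.2
      ⟨G.symm _ _ (hcore a ha v hv), G.symm _ _ (hcore b hb v hv),
        G.symm _ _ (hcore c hcm v hv)⟩
    exact huv (clique u huS v hvS)
  obtain ⟨z, hzS, hzsig⟩ := hz
  refine ⟨hIxy, z, hzsig, ?_⟩
  have clique2 := G.ax22 x y z hxy hIxy hzsig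
  have sub : perp G.I {a, b, c} ⊆ perp G.I {x, y, z} := by
    intro w hw
    exact mem_perp_triple.2 ⟨clique w hw x hx, clique w hw y hy, clique w hw z hzS⟩
  refine Set.Subset.antisymm sub fun w hw => ?_
  exact mem_perp_triple.2
    ⟨clique2 w hw a (sub ha), clique2 w hw b (sub hb), clique2 w hw c (sub hcm)⟩

/-- Lemma B: a point is never equal to a plane (uses AX3 and AX4). -/
lemma pt_ne_pl (G : LabeledLineGeom L) {a b x y : L} (hab : a ≠ b) (hIab : G.I a b)
    (hxy : x ≠ y) (hIxy : G.I x y) : G.pt a b ≠ G.pl x y := by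
  intro heq
  obtain ⟨c, hc⟩ := G.SY_nonempty a b hab hIab
  have hcsig : c ∈ lineSig G.I a b := by
    rw [← G.SY_union_SD a b hab hIab]; exact Or.inl hc
  have hpt := G.pt_spec a b c hab hIab hc
  obtain ⟨p, q, r, ⟨hpq, hIpq, hrsig⟩, hdisj⟩ := G.ax3 a b c ⟨hab, hIab, hcsig⟩
  have hr : r ∈ G.SY p q ∪ G.SD p q := by
    rw [G.SY_union_SD p q hpq hIpq]; exact hrsig
  cases hr with
  | inl h =>
    obtain ⟨w, hw1, hw2⟩ := (G.ax4 a b p q hab hIab hpq hIpq).1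
    rw [hpt] at hw1
    rw [G.pt_spec p q r hpq hIpq h] at hw2
    exact (Set.eq_empty_iff_forall_notMem.1 hdisj w) ⟨hw1, hw2⟩
  | inr h =>
    obtain ⟨w, hw1, hw2⟩ := (G.ax4 x y p q hxy hIxy hpq hIpq).2
    rw [← heq, hpt] at hw1
    rw [G.pl_spec p q r hpq hIpq h] at hw2
    exact (Set.eq_empty_iff_forall_notMem.1 hdisj w) ⟨hw1, hw2⟩

/-- Lemma C: a point containing two distinct lines is their `Y`. -/
lemma point_eq_pt (G : LabeledLineGeom L) {A : Set L} (hA : IsPoint G A)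
    {x y : L} (hx : x ∈ A) (hy : y ∈ A) (hxy : x ≠ y) :
    G.I x y ∧ A = G.pt x y := by
  obtain ⟨a, b, hab, hIab, rfl⟩ := hA
  obtain ⟨c, hc⟩ := G.SY_nonempty a b hab hIab
  have hcsig : c ∈ lineSig G.I a b := by
    rw [← G.SY_union_SD a b hab hIab]; exact Or.inl hc
  have hpt := G.pt_spec a b c hab hIab hc
  rw [hpt] at hx hy
  obtain ⟨hIxy, z, hzsig, heq⟩ :=
    exists_core G.toLineGeom hab hIab hcsig hx hy hxy
  have hz : z ∈ G.SY x y ∪ G.SD x y := by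
    rw [G.SY_union_SD x y hxy hIxy]; exact hzsig
  refine ⟨hIxy, ?_⟩
  cases hz with
  | inl h => rw [hpt, heq, ← G.pt_spec x y z hxy hIxy h]
  | inr h =>
    exact absurd (by rw [hpt, heq, ← G.pl_spec x y z hxy hIxy h])
      (pt_ne_pl G hab hIab hxy hIxy)

/-- Lemma C': a plane containing two distinct lines is their `∇`. -/
lemma plane_eq_pl (G : LabeledLineGeom L) {π : Set L} (hπ : IsPlane G π)
    {x y : L} (hx : x ∈ π) (hy : y ∈ π) (hxy : x ≠ y) :
    G.I x y ∧ π = G.pl x y := by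
  obtain ⟨a, b, hab, hIab, rfl⟩ := hπ
  obtain ⟨c, hc⟩ := G.SD_nonempty a b hab hIab
  have hcsig : c ∈ lineSig G.I a b := by
    rw [← G.SY_union_SD a b hab hIab]; exact Or.inr hc
  have hpl := G.pl_spec a b c hab hIab hc
  rw [hpl] at hx hy
  obtain ⟨hIxy, z, hzsig, heq⟩ :=
    exists_core G.toLineGeom hab hIab hcsig hx hy hxy
  have hz : z ∈ G.SY x y ∪ G.SD x y := by
    rw [G.SY_union_SD x y hxy hIxy]; exact hzsig
  refine ⟨hIxy, ?_⟩
  cases hz with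
  | inr h => rw [hpl, heq, ← G.pl_spec x y z hxy hIxy h]
  | inl h =>
    exact absurd (by rw [G.pt_spec x y z hxy hIxy h, ← heq, ← hpl] : G.pt x y = G.pl a b)
      (pt_ne_pl G hxy hIxy hab hIab)

/-- Theorem 15 (paper): if `A ≠ B` are points, both incident with the plane
`π`, then every line `l ∈ A ∩ B` (i.e. the line `AB`) lies in `π`. -/
theorem line_join_mem_plane (G : LabeledLineGeom L) (A B π : Set L)
    (hA : IsPoint G A) (hB : IsPoint G B) (hAB : A ≠ B) (hπ : IsPlane G π)
    (hAπ : (A ∩ π).Nonempty) (hBπ : (B ∩ π).Nonempty)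
    (l : L) (hl : l ∈ A ∩ B) : l ∈ π := by
  obtain ⟨m, hmA, hmπ⟩ := hAπ
  obtain ⟨n, hnB, hnπ⟩ := hBπ
  obtain ⟨hlA, hlB⟩ := hl
  by_cases hlm : l = m
  · rwa [hlm]
  by_cases hln : l = n
  · rwa [hln]
  have hmn : m ≠ n := by
    rintro rfl
    exact hAB (((point_eq_pt G hA hlA hmA hlm).2).trans
      ((point_eq_pt G hB hlB hnB hln).2).symm)
  obtain ⟨hImn, hπpl⟩ := plane_eq_pl G hπ hmπ hnπ hmn
  have hIlm := (point_eq_pt G hA hlA hmA hlm).1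
  have hIln := (point_eq_pt G hB hlB hnB hln).1
  have hlmn : l ∈ perp G.I {m, n} := mem_perp_pair.2 ⟨hIlm, hIln⟩
  by_cases hcore : l ∈ perp G.I (perp G.I {m, n})
  · obtain ⟨d, hd⟩ := G.SD_nonempty m n hmn hImn
    have hdsig : d ∈ lineSig G.I m n := by
      rw [← G.SY_union_SD m n hmn hImn]; exact Or.inr hd
    rw [hπpl, G.pl_spec m n d hmn hImn hd]
    exact mem_perp_triple.2 ⟨hIlm, hIln, hcore d hdsig.1⟩
  · have hl' : l ∈ G.SY m n ∪ G.SD m n := by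
      rw [G.SY_union_SD m n hmn hImn]; exact ⟨hlmn, hcore⟩
    cases hl' with
    | inr h =>
      rw [hπpl, G.pl_spec m n l hmn hImn h]
      exact mem_perp_triple.2 ⟨hIlm, hIln, G.refl l⟩
    | inl h =>
      exfalso
      have hptmn := G.pt_spec m n l hmn hImn h
      have hlmem : l ∈ G.pt m n := by
        rw [hptmn]; exact mem_perp_triple.2 ⟨hIlm, hIln, G.refl l⟩
      have hmmem : m ∈ G.pt m n := by
        rw [hptmn]; exact mem_perp_triple.2 ⟨G.refl m, hImn, G.symm _ _ hIlm⟩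
      have hnmem : n ∈ G.pt m n := by
        rw [hptmn]
        exact mem_perp_triple.2 ⟨G.symm _ _ hImn, G.refl n, G.symm _ _ hIln⟩
      have hPmn : IsPoint G (G.pt m n) := ⟨m, n, hmn, hImn, rfl⟩
      have e1 := (point_eq_pt G hA hlA hmA hlm).2
      have e2 := (point_eq_pt G hPmn hlmem hmmem hlm).2
      have e3 := (point_eq_pt G hB hlB hnB hln).2
      have e4 := (point_eq_pt G hPmn hlmem hnmem hln).2
      exact hAB ((e1.trans e2.symm).trans (e4.trans e3.symm))

end PSLD
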